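/- Assume deg f > 1. In H(f), for g ∈ ℂ[h] nonzero and i, k ≥ 0, the element x^i g(h) y^k commutes with h if and only if i = k; consequently the centralizer of h in H(f) equals H(f)_0, and H(f)_0 is a maximal commutative subalgebra. -/

import Mathlib

open Polynomial MulOpposite

noncomputable section

/-- Defining relations of the generalized Heisenberg algebra H(f):
generators x (index 0), y (index 1), h (index 2) with
h*x = x*f(h), y*h = f(h)*y, y*x = x*y + (f(h) - h). -/
inductive HeisRel (f : ℂ[X]) : FreeAlgebra ℂ (Fin 3) → FreeAlgebra ℂ (Fin 3) → Prop
  | hx : HeisRel f (FreeAlgebra.ι ℂ 2 * FreeAlgebra.ι ℂ 0)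
      (FreeAlgebra.ι ℂ 0 * aeval (FreeAlgebra.ι ℂ 2) f)
  | yh : HeisRel f (FreeAlgebra.ι ℂ 1 * FreeAlgebra.ι ℂ 2)
      (aeval (FreeAlgebra.ι ℂ 2) f * FreeAlgebra.ι ℂ 1)
  | yx : HeisRel f (FreeAlgebra.ι ℂ 1 * FreeAlgebra.ι ℂ 0)
      (FreeAlgebra.ι ℂ 0 * FreeAlgebra.ι ℂ 1 + (aeval (FreeAlgebra.ι ℂ 2) f - FreeAlgebra.ι ℂ 2))

/-- The generalized Heisenberg algebra H(f). -/
abbrev GHA (f : ℂ[X]) := RingQuot (HeisRel f)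

def ghaX (f : ℂ[X]) : GHA f := RingQuot.mkAlgHom ℂ (HeisRel f) (FreeAlgebra.ι ℂ 0)
def ghaY (f : ℂ[X]) : GHA f := RingQuot.mkAlgHom ℂ (HeisRel f) (FreeAlgebra.ι ℂ 1)
def ghaH (f : ℂ[X]) : GHA f := RingQuot.mkAlgHom ℂ (HeisRel f) (FreeAlgebra.ι ℂ 2)

/-- k-th compositional power of σ applied to h, as a polynomial: σ^k(h). -/
def sigmaIter (f : ℂ[X]) : ℕ → ℂ[X]
  | 0 => X
  | k + 1 => (sigmaIter f k).comp f

/-! `H(f)` acts on its space of normal forms `x ^ i * p(h) * y ^ k`, and applying the action to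
the normal form of `1` inverts normal ordering, so the `x ^ i * h ^ n * y ^ k` form a basis of
`H(f)`. In these coordinates left multiplication by `h` multiplies the `(i, k)`-coefficient by
`σ^i(h)` and right multiplication by `σ^k(h)`; these differ for `i ≠ k` because their degrees
`(deg f) ^ i` and `(deg f) ^ k` do. So `h` commutes exactly with the diagonal part `H(f)_0`, and
since `h ∈ H(f)_0`, whatever commutes with `H(f)_0` lies in it. -/

lemma sigmaIter_succ' (f : ℂ[X]) (k : ℕ) : sigmaIter f (k + 1) = f.comp (sigmaIter f k) := by
  induction k with
  | zero => simp [sigmaIter]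
  | succ k ih =>
    show (sigmaIter f (k + 1)).comp f = f.comp ((sigmaIter f k).comp f)
    rw [ih, comp_assoc]

lemma comp_sigmaIter (f : ℂ[X]) (k : ℕ) : f.comp (sigmaIter f k) = (sigmaIter f k).comp f :=
  (sigmaIter_succ' f k).symm

lemma natDegree_sigmaIter (f : ℂ[X]) (k : ℕ) : (sigmaIter f k).natDegree = f.natDegree ^ k := by
  induction k with
  | zero => simp [sigmaIter]
  | succ k ih => rw [sigmaIter, natDegree_comp, ih, pow_succ]

lemma sigmaIter_injective {f : ℂ[X]} (hf : 1 < f.natDegree) : Function.Injective (sigmaIter f) :=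
  fun i k h => Nat.pow_right_injective hf <| by
    simpa only [natDegree_sigmaIter] using congrArg natDegree h

lemma aeval_mul_eq_mul_aeval {R A : Type*} [CommSemiring R] [Semiring A] [Algebra R A]
    {a b x : A} (h : a * x = x * b) (p : R[X]) : aeval a p * x = x * aeval b p := by
  induction p using Polynomial.induction_on' with
  | add p q hp hq => rw [map_add, map_add, add_mul, mul_add, hp, hq]
  | monomial n c =>
    rw [aeval_monomial, aeval_monomial, mul_assoc, ← (SemiconjBy.pow_right h.symm n).eq,
      ← mul_assoc, ← mul_assoc, Algebra.commutes]

section Relations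

variable {f : ℂ[X]}

lemma ghaH_mul_ghaX : ghaH f * ghaX f = ghaX f * aeval (ghaH f) f := by
  have h := RingQuot.mkAlgHom_rel ℂ (HeisRel.hx (f := f))
  rwa [map_mul, map_mul, ← aeval_algHom_apply] at h

lemma ghaY_mul_ghaH : ghaY f * ghaH f = aeval (ghaH f) f * ghaY f := by
  have h := RingQuot.mkAlgHom_rel ℂ (HeisRel.yh (f := f))
  rwa [map_mul, map_mul, ← aeval_algHom_apply] at h

lemma ghaY_mul_ghaX : ghaY f * ghaX f = ghaX f * ghaY f + (aeval (ghaH f) f - ghaH f) := by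
  have h := RingQuot.mkAlgHom_rel ℂ (HeisRel.yx (f := f))
  rwa [map_mul, map_add, map_mul, map_sub, ← aeval_algHom_apply] at h

lemma aeval_ghaH_mul_ghaX (p : ℂ[X]) :
    aeval (ghaH f) p * ghaX f = ghaX f * aeval (ghaH f) (p.comp f) := by
  rw [aeval_mul_eq_mul_aeval ghaH_mul_ghaX, aeval_comp]

lemma ghaY_mul_aeval_ghaH (p : ℂ[X]) :
    ghaY f * aeval (ghaH f) p = aeval (ghaH f) (p.comp f) * ghaY f := by
  rw [aeval_comp, aeval_mul_eq_mul_aeval ghaY_mul_ghaH.symm]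

lemma ghaH_mul_ghaX_pow (i : ℕ) :
    ghaH f * ghaX f ^ i = ghaX f ^ i * aeval (ghaH f) (sigmaIter f i) := by
  induction i with
  | zero => simp [sigmaIter]
  | succ i ih => rw [pow_succ, ← mul_assoc, ih, mul_assoc, aeval_ghaH_mul_ghaX, ← mul_assoc,
      ← sigmaIter]

lemma ghaY_pow_mul_aeval_ghaH (k : ℕ) (p : ℂ[X]) :
    ghaY f ^ k * aeval (ghaH f) p = aeval (ghaH f) (p.comp (sigmaIter f k)) * ghaY f ^ k := by
  induction k with
  | zero => simp [sigmaIter]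
  | succ k ih => rw [pow_succ', mul_assoc, ih, ← mul_assoc, ghaY_mul_aeval_ghaH, mul_assoc,
      comp_assoc, ← sigmaIter]

lemma ghaY_pow_mul_ghaH (k : ℕ) :
    ghaY f ^ k * ghaH f = aeval (ghaH f) (sigmaIter f k) * ghaY f ^ k := by
  simpa using ghaY_pow_mul_aeval_ghaH (f := f) k X

lemma ghaY_mul_ghaX_pow_succ (i : ℕ) :
    ghaY f * ghaX f ^ (i + 1) =
      ghaX f ^ (i + 1) * ghaY f + ghaX f ^ i * aeval (ghaH f) (sigmaIter f (i + 1) - X) := by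
  induction i with
  | zero => simp [sigmaIter, ghaY_mul_ghaX]
  | succ i ih =>
    rw [pow_succ _ (i + 1), ← mul_assoc, ih, add_mul, mul_assoc, ghaY_mul_ghaX, mul_assoc,
      aeval_ghaH_mul_ghaX, mul_add, ← mul_assoc, ← pow_succ, ← mul_assoc, ← pow_succ,
      add_assoc, ← mul_add]
    congr 2
    rw [show sigmaIter f (i + 1 + 1) = (sigmaIter f (i + 1)).comp f from rfl, sub_comp, X_comp,
      map_sub, map_sub, aeval_X]
    abel

lemma ghaY_mul_ghaX_pow (i : ℕ) :
    ghaY f * ghaX f ^ i =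
      ghaX f ^ i * ghaY f + ghaX f ^ (i - 1) * aeval (ghaH f) (sigmaIter f i - X) := by
  cases i with
  | zero => simp [sigmaIter]
  | succ i => exact ghaY_mul_ghaX_pow_succ i

end Relations

/-- `single (i, k) p` stands for the normal-ordered element `x ^ i * p(h) * y ^ k` of `H(f)`. -/
abbrev NormalForm := (ℕ × ℕ) →₀ ℂ[X]

namespace NormalForm

def pointwiseMul (c : ℕ × ℕ → ℂ[X]) : NormalForm →ₗ[ℂ] NormalForm :=
  Finsupp.lsum ℂ fun ik => Finsupp.lsingle ik ∘ₗ (LinearMap.mulLeft ℂ (c ik))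

@[simp] lemma pointwiseMul_single (c : ℕ × ℕ → ℂ[X]) (ik : ℕ × ℕ) (p : ℂ[X]) :
    pointwiseMul c (Finsupp.single ik p) = Finsupp.single ik (c ik * p) := by
  simp [pointwiseMul]

lemma pointwiseMul_apply (c : ℕ × ℕ → ℂ[X]) (m : NormalForm) (ik : ℕ × ℕ) :
    pointwiseMul c m ik = c ik * m ik := by
  induction m using Finsupp.induction_linear with
  | zero => simp
  | add m n hm hn => simp [hm, hn, mul_add]
  | single jl p =>
    rw [pointwiseMul_single]
    rcases eq_or_ne jl ik with rfl | hne
    · simp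
    · simp [Finsupp.single_eq_of_ne hne.symm]

lemma pointwiseMul_pow_single (c : ℕ × ℕ → ℂ[X]) (n : ℕ) (ik : ℕ × ℕ) (p : ℂ[X]) :
    (pointwiseMul c ^ n) (Finsupp.single ik p) = Finsupp.single ik (c ik ^ n * p) := by
  induction n generalizing p with
  | zero => simp
  | succ n ih => rw [pow_succ, Module.End.mul_apply, pointwiseMul_single, ih, pow_succ, mul_assoc]

lemma aeval_pointwiseMul_single (c : ℕ × ℕ → ℂ[X]) (q : ℂ[X]) (ik : ℕ × ℕ)
    (p : ℂ[X]) :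
    aeval (pointwiseMul c) q (Finsupp.single ik p) = Finsupp.single ik (q.comp (c ik) * p) := by
  induction q using Polynomial.induction_on' with
  | add q r hq hr => simp [hq, hr, add_mul]
  | monomial n a =>
    simp [aeval_monomial, Algebra.algebraMap_eq_smul_one, pointwiseMul_pow_single,
      Finsupp.smul_single, -Finsupp.single_mul, smul_eq_C_mul, monomial_comp, mul_assoc]

variable (f : ℂ[X])

def opX : Module.End ℂ NormalForm := Finsupp.lsum ℂ fun ik => Finsupp.lsingle (ik.1 + 1, ik.2)

def opH : Module.End ℂ NormalForm := pointwiseMul fun ik => sigmaIter f ik.1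

/-- The second summand comes from `y * x ^ i = x ^ i * y + x ^ (i - 1) * (σ^i(h) - h)`; at `i = 0`
the truncated index `i - 1` is harmless since `σ^0 - X = 0`. -/
def opY : Module.End ℂ NormalForm :=
  Finsupp.lsum ℂ fun ik =>
    Finsupp.lsingle (ik.1, ik.2 + 1) ∘ₗ (aeval f).toLinearMap +
    Finsupp.lsingle (ik.1 - 1, ik.2) ∘ₗ LinearMap.mulLeft ℂ (sigmaIter f ik.1 - X)

@[simp] lemma opX_single (ik : ℕ × ℕ) (p : ℂ[X]) :
    opX (Finsupp.single ik p) = Finsupp.single (ik.1 + 1, ik.2) p := by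
  simp [opX]

@[simp] lemma opH_single (ik : ℕ × ℕ) (p : ℂ[X]) :
    opH f (Finsupp.single ik p) = Finsupp.single ik (sigmaIter f ik.1 * p) :=
  pointwiseMul_single _ _ _

@[simp] lemma opY_single (ik : ℕ × ℕ) (p : ℂ[X]) :
    opY f (Finsupp.single ik p) = Finsupp.single (ik.1, ik.2 + 1) (p.comp f) +
      Finsupp.single (ik.1 - 1, ik.2) ((sigmaIter f ik.1 - X) * p) := by
  simp [opY, comp_eq_aeval]

@[simp] lemma aeval_opH_single (q : ℂ[X]) (ik : ℕ × ℕ) (p : ℂ[X]) :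
    aeval (opH f) q (Finsupp.single ik p) = Finsupp.single ik (q.comp (sigmaIter f ik.1) * p) :=
  aeval_pointwiseMul_single _ _ _ _

lemma opH_mul_opX : opH f * opX = opX * aeval (opH f) f := by
  refine Finsupp.lhom_ext fun ik p => ?_
  simp only [Module.End.mul_apply, opX_single, opH_single, aeval_opH_single]
  rw [← sigmaIter_succ', sigmaIter]

lemma opY_mul_opH : opY f * opH f = aeval (opH f) f * opY f := by
  refine Finsupp.lhom_ext fun ⟨i, k⟩ p => ?_
  cases i with
  | zero => simp [sigmaIter, -Finsupp.single_mul, mul_comp]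
  | succ i =>
    simp only [Module.End.mul_apply, opY_single, opH_single, aeval_opH_single, map_add,
      Nat.add_sub_cancel]
    rw [mul_comp, comp_sigmaIter f (i + 1), ← sigmaIter_succ' f i, mul_left_comm]

lemma opY_mul_opX : opY f * opX = opX * opY f + (aeval (opH f) f - opH f) := by
  refine Finsupp.lhom_ext fun ⟨i, k⟩ p => ?_
  cases i with
  | zero => simp [sigmaIter, -Finsupp.single_mul, ← Finsupp.single_sub, sub_mul]
  | succ i =>
    simp only [Module.End.mul_apply, LinearMap.add_apply, LinearMap.sub_apply, opX_single,
      opY_single, opH_single, aeval_opH_single, map_add, add_tsub_cancel_right]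
    rw [← Finsupp.single_sub, add_assoc (Finsupp.single _ _), ← Finsupp.single_add,
      sigmaIter_succ' f (i + 1)]
    congr 2
    ring

end NormalForm

section Representation

variable {f : ℂ[X]}

@[elab_as_elim]
lemma GHA.induction {motive : GHA f → Prop}
    (algebraMap : ∀ r : ℂ, motive (algebraMap ℂ (GHA f) r))
    (ghaX : motive (ghaX f)) (ghaY : motive (ghaY f)) (ghaH : motive (ghaH f))
    (add : ∀ a b, motive a → motive b → motive (a + b))
    (mul : ∀ a b, motive a → motive b → motive (a * b)) (a : GHA f) : motive a := by
  obtain ⟨u, rfl⟩ := RingQuot.mkAlgHom_surjective ℂ (HeisRel f) a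
  induction u using FreeAlgebra.induction with
  | grade0 r => simpa only [AlgHom.commutes] using algebraMap r
  | grade1 j => fin_cases j <;> assumption
  | mul u v hu hv => simpa only [map_mul] using mul _ _ hu hv
  | add u v hu hv => simpa only [map_add] using add _ _ hu hv

open NormalForm

variable (f) in
def ghaRep : GHA f →ₐ[ℂ] Module.End ℂ NormalForm :=
  RingQuot.liftAlgHom ℂ ⟨FreeAlgebra.lift ℂ ![opX, opY f, opH f], fun _ _ h => by
    cases h <;> simp [← aeval_algHom_apply, opH_mul_opX, opY_mul_opH, opY_mul_opX]⟩

@[simp] lemma ghaRep_ghaX : ghaRep f (ghaX f) = opX := by simp [ghaRep, ghaX]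
@[simp] lemma ghaRep_ghaY : ghaRep f (ghaY f) = opY f := by simp [ghaRep, ghaY]
@[simp] lemma ghaRep_ghaH : ghaRep f (ghaH f) = opH f := by simp [ghaRep, ghaH]

variable (f) in
def toGHA : NormalForm →ₗ[ℂ] GHA f :=
  Finsupp.lsum ℂ fun ik => LinearMap.mulLeft ℂ (ghaX f ^ ik.1) ∘ₗ
    LinearMap.mulRight ℂ (ghaY f ^ ik.2) ∘ₗ (aeval (ghaH f)).toLinearMap

lemma toGHA_single (i k : ℕ) (p : ℂ[X]) :
    toGHA f (Finsupp.single (i, k) p) = ghaX f ^ i * aeval (ghaH f) p * ghaY f ^ k := by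
  simp [toGHA, mul_assoc]

lemma toGHA_opX (m : NormalForm) : toGHA f (opX m) = ghaX f * toGHA f m :=
  LinearMap.congr_fun (Finsupp.lhom_ext (φ := toGHA f ∘ₗ opX)
    (ψ := LinearMap.mulLeft ℂ (ghaX f) ∘ₗ toGHA f) fun ⟨i, k⟩ p => by
      simp [toGHA_single, pow_succ', mul_assoc]) m

lemma toGHA_opH (m : NormalForm) : toGHA f (opH f m) = ghaH f * toGHA f m :=
  LinearMap.congr_fun (Finsupp.lhom_ext (φ := toGHA f ∘ₗ opH f)
    (ψ := LinearMap.mulLeft ℂ (ghaH f) ∘ₗ toGHA f) fun ⟨i, k⟩ p => by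
      simp [toGHA_single, ← mul_assoc, ghaH_mul_ghaX_pow, -Finsupp.single_mul]) m

lemma toGHA_opY (m : NormalForm) : toGHA f (opY f m) = ghaY f * toGHA f m :=
  LinearMap.congr_fun (Finsupp.lhom_ext (φ := toGHA f ∘ₗ opY f)
    (ψ := LinearMap.mulLeft ℂ (ghaY f) ∘ₗ toGHA f) fun ⟨i, k⟩ p => by
      simp only [LinearMap.comp_apply, LinearMap.mulLeft_apply, opY_single, map_add, toGHA_single]
      rw [← mul_assoc, ← mul_assoc, ghaY_mul_ghaX_pow, add_mul, add_mul, mul_assoc _ (ghaY f),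
        ghaY_mul_aeval_ghaH]
      simp only [map_mul, pow_succ', mul_assoc]) m

lemma toGHA_ghaRep (a : GHA f) (m : NormalForm) : toGHA f (ghaRep f a m) = a * toGHA f m := by
  induction a using GHA.induction generalizing m with
  | algebraMap r => simp [Algebra.algebraMap_eq_smul_one]
  | ghaX => simpa using toGHA_opX m
  | ghaY => simpa using toGHA_opY m
  | ghaH => simpa using toGHA_opH m
  | add a b ha hb => simp [ha, hb, add_mul]
  | mul a b ha hb => simp [ha, hb, mul_assoc]

def NormalForm.vacuum : NormalForm := Finsupp.single (0, 0) 1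

lemma ghaRep_apply_vacuum (i k : ℕ) (p : ℂ[X]) :
    ghaRep f (ghaX f ^ i * aeval (ghaH f) p * ghaY f ^ k) vacuum = Finsupp.single (i, k) p := by
  have hY : ∀ k, (opY f ^ k) vacuum = Finsupp.single (0, k) 1 := by
    intro k
    induction k with
    | zero => rfl
    | succ k ih => simp [pow_succ', ih, sigmaIter]
  have hX : ∀ i, (opX ^ i) (Finsupp.single (0, k) p) = Finsupp.single (i, k) p := by
    intro i
    induction i with
    | zero => rfl
    | succ i ih => rw [pow_succ', Module.End.mul_apply, ih, opX_single]
  simp [← aeval_algHom_apply, hY, sigmaIter, hX]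

variable (f) in
def normalForm : NormalForm ≃ₗ[ℂ] GHA f :=
  LinearEquiv.ofLinearMap (toGHA f) (LinearMap.applyₗ vacuum ∘ₗ (ghaRep f).toLinearMap)
    (LinearMap.ext fun a => by simp [toGHA_ghaRep, vacuum, toGHA_single])
    (Finsupp.lhom_ext fun ⟨i, k⟩ p => by
      rw [LinearMap.comp_apply, toGHA_single]
      exact ghaRep_apply_vacuum i k p)

lemma normalForm_apply (m : NormalForm) : normalForm f m = toGHA f m := rfl

end Representation

section Centralizer

variable {f : ℂ[X]}

open NormalForm

lemma toGHA_mul_ghaH (m : NormalForm) :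
    toGHA f m * ghaH f = toGHA f (pointwiseMul (fun ik => sigmaIter f ik.2) m) :=
  LinearMap.congr_fun (Finsupp.lhom_ext (φ := LinearMap.mulRight ℂ (ghaH f) ∘ₗ toGHA f)
    (ψ := toGHA f ∘ₗ pointwiseMul fun ik => sigmaIter f ik.2) fun ⟨i, k⟩ p => by
      simp only [LinearMap.comp_apply, LinearMap.mulRight_apply, pointwiseMul_single,
        toGHA_single]
      rw [mul_assoc, ghaY_pow_mul_ghaH, ← mul_assoc, mul_assoc (ghaX f ^ i), ← map_mul,
        mul_comm]) m

lemma commute_ghaH_iff (hf : 1 < f.natDegree) (a : GHA f) :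
    Commute (ghaH f) a ↔
      (normalForm f).symm a ∈ Finsupp.supported ℂ[X] ℂ (Set.diagonal ℕ) := by
  obtain ⟨m, rfl⟩ := (normalForm f).surjective a
  rw [LinearEquiv.symm_apply_apply, normalForm_apply, Commute, SemiconjBy, ← toGHA_opH,
    toGHA_mul_ghaH, ← normalForm_apply, ← normalForm_apply, (normalForm f).injective.eq_iff,
    Finsupp.mem_supported']
  simp only [opH, Finsupp.ext_iff, pointwiseMul_apply, mul_eq_mul_right_iff,
    (sigmaIter_injective hf).eq_iff, Set.mem_diagonal_iff]
  exact forall_congr' fun _ => or_iff_not_imp_left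

variable (f) in
/-- `H(f)_0`, the degree-zero part for the grading `deg x = 1`, `deg y = -1`, `deg h = 0`. -/
def gradeZero : Submodule ℂ (GHA f) :=
  Submodule.span ℂ {a : GHA f | ∃ k m : ℕ, a = (ghaX f) ^ k * (ghaH f) ^ m * (ghaY f) ^ k}

lemma toGHA_single_diag_mem_gradeZero (k : ℕ) (p : ℂ[X]) :
    toGHA f (Finsupp.single (k, k) p) ∈ gradeZero f := by
  induction p using Polynomial.induction_on' with
  | add p q hp hq => simpa only [Finsupp.single_add, map_add] using add_mem hp hq
  | monomial n c =>
    rw [← C_mul_X_pow_eq_monomial, ← smul_eq_C_mul, ← Finsupp.smul_single, map_smul,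
      toGHA_single]
    exact Submodule.smul_mem _ _ (Submodule.subset_span ⟨k, n, by simp⟩)

lemma gradeZero_eq_map :
    gradeZero f = (Finsupp.supported ℂ[X] ℂ (Set.diagonal ℕ)).map
      (normalForm f : NormalForm →ₗ[ℂ] GHA f) := by
  apply le_antisymm
  · rw [gradeZero, Submodule.span_le]
    rintro _ ⟨k, n, rfl⟩
    exact ⟨Finsupp.single (k, k) (X ^ n), Finsupp.single_mem_supported _ _ (Set.mem_diagonal k),
      by simp [normalForm_apply, toGHA_single]⟩
  · rintro _ ⟨m, hm, rfl⟩
    rw [← m.sum_single, LinearEquiv.coe_coe, map_finsuppSum]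
    refine Submodule.finsuppSum_mem _ _ _ _ fun ik hik => ?_
    obtain ⟨k, rfl⟩ : ∃ k, ik = (k, k) :=
      ⟨ik.1, Prod.ext rfl (hm (Finsupp.mem_support_iff.2 hik)).symm⟩
    exact toGHA_single_diag_mem_gradeZero k _

lemma mem_gradeZero_iff (a : GHA f) :
    a ∈ gradeZero f ↔
      (normalForm f).symm a ∈ Finsupp.supported ℂ[X] ℂ (Set.diagonal ℕ) := by
  rw [gradeZero_eq_map, Submodule.mem_map_equiv]

lemma commute_ghaH_iff_mem_gradeZero (hf : 1 < f.natDegree) (a : GHA f) :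
    Commute (ghaH f) a ↔ a ∈ gradeZero f :=
  (commute_ghaH_iff hf a).trans (mem_gradeZero_iff a).symm

lemma commute_ghaH_monomial_iff (hf : 1 < f.natDegree) {g : ℂ[X]} (hg : g ≠ 0) (i k : ℕ) :
    Commute (ghaH f) (ghaX f ^ i * aeval (ghaH f) g * ghaY f ^ k) ↔ i = k := by
  rw [← toGHA_single, commute_ghaH_iff hf, ← normalForm_apply, LinearEquiv.symm_apply_apply,
    Finsupp.mem_supported, Finsupp.support_single _ hg]
  simp

end Centralizer

/-- For deg f > 1: x^i g(h) y^k commutes with h iff i = k (g ≠ 0); the centralizer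
of h in H(f) is exactly H(f)_0, and H(f)_0 is maximal commutative. -/
theorem gha_centralizer_h (f : ℂ[X]) (hf : 1 < f.natDegree) :
    (∀ (g : ℂ[X]), g ≠ 0 → ∀ i k : ℕ,
        (Commute (ghaH f) ((ghaX f) ^ i * aeval (ghaH f) g * (ghaY f) ^ k) ↔ i = k)) ∧
    (∀ a : GHA f,
        Commute (ghaH f) a ↔
          a ∈ Submodule.span ℂ
            {a : GHA f | ∃ k m : ℕ, a = (ghaX f) ^ k * (ghaH f) ^ m * (ghaY f) ^ k}) ∧
    (∀ a : GHA f,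
        (∀ b ∈ Submodule.span ℂ
            {a : GHA f | ∃ k m : ℕ, a = (ghaX f) ^ k * (ghaH f) ^ m * (ghaY f) ^ k},
          Commute a b) →
        a ∈ Submodule.span ℂ
          {a : GHA f | ∃ k m : ℕ, a = (ghaX f) ^ k * (ghaH f) ^ m * (ghaY f) ^ k}) := by
  refine ⟨fun g hg => commute_ghaH_monomial_iff hf hg, commute_ghaH_iff_mem_gradeZero hf,
    fun a hcomm => ?_⟩
  have hh : ghaH f ∈ gradeZero f := (commute_ghaH_iff_mem_gradeZero hf _).1 (Commute.refl _)
  exact (commute_ghaH_iff_mem_gradeZero hf a).1 (hcomm _ hh).symm
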